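/- arXiv:2109.06900 — 2 statements merged into one kernel-verified Lean document; each statement's English description precedes it below -/
import Mathlib

section
/- Let ρ be a qubit density matrix and n ∈ ℝ³ a unit vector. Then there exists a pure-state decomposition ρ = ∑ₖ pₖ |ψₖ⟩⟨ψₖ| with at most two elements whose average variance attains the minimal value: ∑ₖ pₖ (ΔL_n)²_{ψₖ} = (ΔL_n)²_ρ − (1 − Tr(ρ²))/2. (Geometrically, this minimal decomposition corresponds to the chord through the Bloch vector of ρ that is parallel to n.) -/
open Matrix BigOperators
open scoped ComplexOrder

/-- The Pauli matrix σx. -/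
def sigmaX : Matrix (Fin 2) (Fin 2) ℂ := !![0, 1; 1, 0]

/-- The Pauli matrix σy. -/
def sigmaY : Matrix (Fin 2) (Fin 2) ℂ := !![0, -Complex.I; Complex.I, 0]

/-- The Pauli matrix σz. -/
def sigmaZ : Matrix (Fin 2) (Fin 2) ℂ := !![1, 0; 0, -1]

/-- The spin-1/2 operator L_n = (n₁σx + n₂σy + n₃σz)/2 along the direction n ∈ ℝ³. -/
noncomputable def Lspin (n : Fin 3 → ℝ) : Matrix (Fin 2) (Fin 2) ℂ :=
  (1 / 2 : ℂ) • ((n 0 : ℂ) • sigmaX + (n 1 : ℂ) • sigmaY + (n 2 : ℂ) • sigmaZ)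

/-- A qubit density matrix: 2×2 positive semidefinite with unit trace. -/
def IsDensity (ρ : Matrix (Fin 2) (Fin 2) ℂ) : Prop :=
  ρ.PosSemidef ∧ ρ.trace = 1

/-- The rank-one projection |ψ⟩⟨ψ|. -/
def ketbra (ψ : Fin 2 → ℂ) : Matrix (Fin 2) (Fin 2) ℂ :=
  Matrix.vecMulVec ψ (star ψ)

/-- Pure-state variance (ΔA)²_ψ = ⟨ψ, A²ψ⟩ − ⟨ψ, Aψ⟩². -/
noncomputable def pureVar (A : Matrix (Fin 2) (Fin 2) ℂ) (ψ : Fin 2 → ℂ) : ℝ :=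
  (star ψ ⬝ᵥ (A * A).mulVec ψ).re - ((star ψ ⬝ᵥ A.mulVec ψ).re) ^ 2

/-- Mixed-state variance (ΔA)²_ρ = Tr(A²ρ) − (Tr(Aρ))². -/
noncomputable def mixVar (A ρ : Matrix (Fin 2) (Fin 2) ℂ) : ℝ :=
  ((A * A * ρ).trace).re - (((A * ρ).trace).re) ^ 2

/-- The purity Tr(ρ²). -/
noncomputable def purity (ρ : Matrix (Fin 2) (Fin 2) ℂ) : ℝ :=
  ((ρ * ρ).trace).re

/-!
In Bloch coordinates a qubit state is ρ = (1 + r·σ)/2 with |r| ≤ 1, pure states are the points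
of the unit sphere, and for a unit vector n the variance of L_n in the state with Bloch vector a
is (1 - (n·a)²)/4. Decomposing ρ along the chord through r parallel to n, both endpoints a± have
(n·a±)² = (n·r)² + 1 - |r|², so the average variance is (|r|² - (n·r)²)/4, which is exactly
(ΔL_n)²_ρ - (1 - Tr ρ²)/2 since Tr ρ² = (1 + |r|²)/2.
-/

lemma exists_chord_endpoints {ι : Type*} [Fintype ι] (r n : ι → ℝ) (hr : r ⬝ᵥ r ≤ 1)
    (hn : n ⬝ᵥ n = 1) :
    ∃ (p : Fin 2 → ℝ) (a : Fin 2 → ι → ℝ), (∀ k, 0 ≤ p k) ∧ ∑ k, p k = 1 ∧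
      ∑ k, p k • a k = r ∧ ∀ k, a k ⬝ᵥ a k = 1 ∧ (n ⬝ᵥ a k) ^ 2 = (n ⬝ᵥ r) ^ 2 + 1 - r ⬝ᵥ r := by
  set s := n ⬝ᵥ r
  set q := √(s ^ 2 + 1 - r ⬝ᵥ r)
  have hq : q ^ 2 = s ^ 2 + 1 - r ⬝ᵥ r := Real.sq_sqrt (by nlinarith)
  have hs : |s| ≤ q := Real.abs_le_sqrt (by linarith)
  have hweight : |s / (2 * q)| ≤ 1 / 2 := by
    rw [abs_div, abs_of_nonneg (by positivity : 0 ≤ 2 * q)]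
    exact div_le_of_le_mul₀ (by positivity) (by norm_num) (by linarith)
  -- the weights 1/2 ± s/(2q) below satisfy ∑ p t = 0; if q = 0 then also s = 0, and the junk
  -- value s / 0 = 0 still gives the correct weights 1/2
  have hcancel : s / (2 * q) * (2 * q) = s :=
    div_mul_cancel_of_imp fun h => abs_nonpos_iff.mp (by linarith)
  -- the line r + t n meets the unit sphere where (t + s)² = q²
  let t : Fin 2 → ℝ := ![q - s, -q - s]
  have ht : ∀ k, (t k + s) ^ 2 = q ^ 2 := fun k => by fin_cases k <;> simp [t]
  have hnormsq : ∀ k, (r + t k • n) ⬝ᵥ (r + t k • n) = r ⬝ᵥ r + (t k + s) ^ 2 - s ^ 2 := by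
    intro k
    simp only [add_dotProduct, dotProduct_add, smul_dotProduct, dotProduct_smul, hn,
      dotProduct_comm r n, smul_eq_mul]
    ring
  refine ⟨![1 / 2 + s / (2 * q), 1 / 2 - s / (2 * q)], fun k => r + t k • n, ?_, ?_, ?_, ?_⟩
  · intro k
    fin_cases k <;> simp <;> linarith [abs_le.mp hweight]
  · norm_num [Fin.sum_univ_two]
  · ext i
    simp [Fin.sum_univ_two, t]
    linear_combination n i * hcancel
  · intro k
    refine ⟨by rw [hnormsq, ht, hq]; ring, ?_⟩
    rw [dotProduct_add, dotProduct_smul, hn, smul_eq_mul, ← hq, ← ht k]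
    ring

def pauli : Fin 3 → Matrix (Fin 2) (Fin 2) ℂ := ![sigmaX, sigmaY, sigmaZ]

noncomputable def pauliVec : (Fin 3 → ℝ) →ₗ[ℝ] Matrix (Fin 2) (Fin 2) ℂ :=
  Fintype.linearCombination ℝ pauli

lemma pauliVec_apply (a : Fin 3 → ℝ) :
    pauliVec a = !![(a 2 : ℂ), a 0 - a 1 * Complex.I; a 0 + a 1 * Complex.I, -a 2] := by
  ext i j
  fin_cases i <;> fin_cases j <;>
    simp [pauliVec, Fintype.linearCombination_apply, Fin.sum_univ_three, pauli, sigmaX, sigmaY,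
      sigmaZ, ← Complex.coe_smul]
  ring

lemma Lspin_eq_smul_pauliVec (n : Fin 3 → ℝ) : Lspin n = (1 / 2 : ℂ) • pauliVec n := by
  simp [Lspin, pauliVec, Fintype.linearCombination_apply, Fin.sum_univ_three, pauli]

lemma pauliVec_mul_pauliVec (a b : Fin 3 → ℝ) :
    pauliVec a * pauliVec b = ((a ⬝ᵥ b : ℝ) : ℂ) • 1 + Complex.I • pauliVec (a ⨯₃ b) := by
  simp only [pauliVec_apply, cross_apply]
  ext i j
  fin_cases i <;> fin_cases j <;>
    simp [Matrix.mul_apply, Fin.sum_univ_two, dotProduct, Fin.sum_univ_three, Complex.ext_iff] <;>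
    (try constructor) <;> ring

lemma trace_pauliVec (a : Fin 3 → ℝ) : (pauliVec a).trace = 0 := by
  simp [pauliVec_apply, Matrix.trace_fin_two]

lemma trace_pauliVec_mul_pauliVec (a b : Fin 3 → ℝ) :
    (pauliVec a * pauliVec b).trace = 2 * (a ⬝ᵥ b : ℝ) := by
  rw [pauliVec_mul_pauliVec, trace_add, trace_smul, trace_smul, trace_pauliVec, trace_one]
  simp [mul_comm]

lemma pauliVec_mul_self (a : Fin 3 → ℝ) :
    pauliVec a * pauliVec a = ((a ⬝ᵥ a : ℝ) : ℂ) • 1 := by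
  simp [pauliVec_mul_pauliVec]

noncomputable def blochMat (a : Fin 3 → ℝ) : Matrix (Fin 2) (Fin 2) ℂ :=
  (1 / 2 : ℂ) • (1 + pauliVec a)

lemma blochMat_apply (a : Fin 3 → ℝ) : blochMat a =
    !![(1 + a 2 : ℂ) / 2, (a 0 - a 1 * Complex.I) / 2;
      (a 0 + a 1 * Complex.I) / 2, (1 - a 2) / 2] := by
  ext i j
  fin_cases i <;> fin_cases j <;> simp [blochMat, pauliVec_apply] <;> ring

lemma trace_blochMat (a : Fin 3 → ℝ) : (blochMat a).trace = 1 := by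
  simp [blochMat, trace_add, trace_pauliVec]

lemma trace_pauliVec_mul_blochMat (a b : Fin 3 → ℝ) :
    (pauliVec a * blochMat b).trace = (a ⬝ᵥ b : ℝ) := by
  simp [blochMat, mul_add, trace_add, trace_pauliVec, trace_pauliVec_mul_pauliVec]

lemma trace_blochMat_mul_self (a : Fin 3 → ℝ) :
    (blochMat a * blochMat a).trace = ((1 + a ⬝ᵥ a) / 2 : ℝ) := by
  simp [blochMat, add_mul, mul_add, trace_add, trace_pauliVec, trace_pauliVec_mul_pauliVec]
  ring

lemma det_blochMat (a : Fin 3 → ℝ) : (blochMat a).det = ((1 - a ⬝ᵥ a) / 4 : ℝ) := by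
  rw [blochMat_apply, det_fin_two_of]
  simp only [dotProduct, Fin.sum_univ_three]
  push_cast
  linear_combination (a 1 : ℂ) ^ 2 / 4 * Complex.I_sq

lemma sum_smul_blochMat {ι : Type*} [Fintype ι] (p : ι → ℝ) (a : ι → Fin 3 → ℝ)
    (hp : ∑ k, p k = 1) : ∑ k, p k • blochMat (a k) = blochMat (∑ k, p k • a k) := by
  simp only [blochMat, smul_add, map_sum, map_smul, Finset.sum_add_distrib, ← Finset.sum_smul, hp,
    smul_comm (p _) (1 / 2 : ℂ), ← Finset.smul_sum, one_smul]

lemma purity_blochMat (a : Fin 3 → ℝ) : purity (blochMat a) = (1 + a ⬝ᵥ a) / 2 := by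
  simp [purity, trace_blochMat_mul_self]

lemma mixVar_Lspin_blochMat (n a : Fin 3 → ℝ) :
    mixVar (Lspin n) (blochMat a) = (n ⬝ᵥ n - (n ⬝ᵥ a) ^ 2) / 4 := by
  simp [mixVar, Lspin_eq_smul_pauliVec, pauliVec_mul_self, trace_blochMat,
    trace_pauliVec_mul_blochMat]
  ring

lemma Matrix.IsHermitian.exists_eq_blochMat {ρ : Matrix (Fin 2) (Fin 2) ℂ} (hρ : ρ.IsHermitian)
    (htr : ρ.trace = 1) : ∃ r, ρ = blochMat r := by
  refine ⟨![2 * (ρ 0 1).re, -2 * (ρ 0 1).im, (ρ 0 0).re - (ρ 1 1).re], ?_⟩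
  have h10 : star (ρ 0 1) = ρ 1 0 := hρ.apply 1 0
  have h00 : (ρ 0 0).im = 0 := Complex.conj_eq_iff_im.mp (hρ.apply 0 0)
  have h11 : (ρ 1 1).im = 0 := Complex.conj_eq_iff_im.mp (hρ.apply 1 1)
  have htr' : (ρ 0 0).re + (ρ 1 1).re = 1 := by
    simpa [trace_fin_two] using congrArg Complex.re htr
  ext i j
  fin_cases i <;> fin_cases j <;>
    simp [blochMat_apply, ← h10, Complex.ext_iff, h00, h11] <;> linarith

lemma IsDensity.exists_eq_blochMat {ρ : Matrix (Fin 2) (Fin 2) ℂ} (hρ : IsDensity ρ) :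
    ∃ r, r ⬝ᵥ r ≤ 1 ∧ ρ = blochMat r := by
  obtain ⟨r, rfl⟩ := hρ.1.isHermitian.exists_eq_blochMat hρ.2
  have hdet := hρ.1.det_nonneg
  rw [det_blochMat, Complex.zero_le_real] at hdet
  exact ⟨r, by linarith, rfl⟩

lemma trace_mul_ketbra (A : Matrix (Fin 2) (Fin 2) ℂ) (ψ : Fin 2 → ℂ) :
    (A * ketbra ψ).trace = star ψ ⬝ᵥ A *ᵥ ψ := by
  rw [ketbra, mul_vecMulVec, trace_vecMulVec, dotProduct_comm]

lemma pureVar_eq_mixVar_ketbra (A : Matrix (Fin 2) (Fin 2) ℂ) (ψ : Fin 2 → ℂ) :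
    pureVar A ψ = mixVar A (ketbra ψ) := by
  rw [pureVar, mixVar, trace_mul_ketbra, trace_mul_ketbra]

lemma dotProduct_star_self_eq_trace_ketbra (ψ : Fin 2 → ℂ) :
    star ψ ⬝ᵥ ψ = (ketbra ψ).trace := by
  rw [ketbra, trace_vecMulVec, dotProduct_comm]

lemma exists_ketbra_eq_blochMat (a : Fin 3 → ℝ) (ha : a ⬝ᵥ a = 1) :
    ∃ ψ : Fin 2 → ℂ, ketbra ψ = blochMat a := by
  simp only [dotProduct, Fin.sum_univ_three] at ha
  -- the spinor used off the south pole divides by `√((1 + a 2) / 2)`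
  rcases eq_or_ne (a 2) (-1) with hsouth | hsouth
  · have h0 : a 0 = 0 := by nlinarith
    have h1 : a 1 = 0 := by nlinarith
    refine ⟨![0, 1], ?_⟩
    rw [blochMat_apply, h0, h1, hsouth]
    ext i j
    fin_cases i <;> fin_cases j <;> simp [ketbra, vecMulVec_apply]
  · have hpos : 0 < 1 + a 2 := lt_of_le_of_ne (by nlinarith) (fun h => hsouth (by linarith))
    have ha' : (a 0 : ℂ) ^ 2 + (a 1 : ℂ) ^ 2 + (a 2 : ℂ) ^ 2 = 1 := by
      exact_mod_cast (by linear_combination ha : a 0 ^ 2 + a 1 ^ 2 + a 2 ^ 2 = 1)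
    set c : ℝ := √((1 + a 2) / 2)
    have hc : (c : ℂ) ^ 2 = (1 + a 2) / 2 := by
      exact_mod_cast Real.sq_sqrt (by linarith : 0 ≤ (1 + a 2) / 2)
    have hc0 : (c : ℂ) ≠ 0 := by exact_mod_cast (Real.sqrt_pos.2 (by linarith)).ne'
    refine ⟨![c, (a 0 + a 1 * Complex.I) / (2 * c)], ?_⟩
    ext i j
    fin_cases i <;> fin_cases j <;>
      simp [ketbra, blochMat_apply, Complex.conj_ofReal]
    · linear_combination hc
    · field_simp; ring
    · field_simp
    · field_simp
      linear_combination ha' - (2 - 2 * (a 2 : ℂ)) * hc - (a 1 : ℂ) ^ 2 * Complex.I_sq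

/-- There exists a pure-state decomposition of a qubit state ρ with at most two elements
whose average variance attains the minimal value (ΔL_n)²_ρ − (1 − Tr ρ²)/2. -/
theorem stmt_7 (ρ : Matrix (Fin 2) (Fin 2) ℂ) (hρ : IsDensity ρ)
    (n : Fin 3 → ℝ) (hn : n ⬝ᵥ n = 1) :
    ∃ (p : Fin 2 → ℝ) (ψ : Fin 2 → (Fin 2 → ℂ)),
      (∀ k, 0 ≤ p k) ∧ (∑ k, p k) = 1 ∧
      (∀ k, star (ψ k) ⬝ᵥ ψ k = 1) ∧
      ρ = (∑ k, p k • ketbra (ψ k)) ∧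
      (∑ k, p k * pureVar (Lspin n) (ψ k))
        = mixVar (Lspin n) ρ - (1 - purity ρ) / 2 := by
  obtain ⟨r, hr, rfl⟩ := hρ.exists_eq_blochMat
  obtain ⟨p, a, hp, hsum, hcomb, ha⟩ := exists_chord_endpoints r n hr hn
  choose ψ hψ using fun k => exists_ketbra_eq_blochMat (a k) (ha k).1
  have hvar : ∀ k, pureVar (Lspin n) (ψ k) = (r ⬝ᵥ r - (n ⬝ᵥ r) ^ 2) / 4 := fun k => by
    rw [pureVar_eq_mixVar_ketbra, hψ, mixVar_Lspin_blochMat, (ha k).2, hn]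
    ring
  refine ⟨p, ψ, hp, hsum, fun k => ?_, ?_, ?_⟩
  · rw [dotProduct_star_self_eq_trace_ketbra, hψ, trace_blochMat]
  · simp only [hψ, sum_smul_blochMat p a hsum, hcomb]
  · rw [mixVar_Lspin_blochMat, purity_blochMat, hn]
    simp only [hvar, ← Finset.sum_mul, hsum]
    ring
end

section
/- Let ρ be a qubit density matrix and n ∈ ℝ³ a unit vector. Then there exists a pure-state decomposition ρ = ∑ₖ pₖ |ψₖ⟩⟨ψₖ| whose average variance attains the variance of ρ itself: ∑ₖ pₖ (ΔL_n)²_{ψₖ} = (ΔL_n)²_ρ. (This realizes the concave-roof property of the variance for qubits; geometrically, such a maximal decomposition corresponds to a chord through the Bloch vector of ρ that is perpendicular to n.) -/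
open Matrix BigOperators
open scoped ComplexOrder

open ComplexConjugate
open scoped MatrixOrder

/-!
Since `n` is a unit vector, `L_n² = 1/4`, so a unit vector `ψ` has variance `1/4 - ⟨L_n⟩_ψ²` and
`ρ` has variance `1/4 - t²` with `t = Tr(L_n ρ)`. It therefore suffices to decompose `ρ` into
pure states all of which have expectation `t`, i.e. on which the quadratic form of
`H = L_n - t` vanishes. Write `ρ = |w₁⟩⟨w₁| + |w₂⟩⟨w₂|`; then `⟨w₁|H|w₁⟩ + ⟨w₂|H|w₂⟩ = Tr(Hρ) = 0`,
and a unitary rotation of the pair by 45°, with a phase chosen to cancel the cross terms,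
splits this zero sum evenly between the two new vectors.
-/

section

variable {ι : Type*} [Fintype ι]

theorem Complex.exists_norm_eq_one_re_mul_eq_zero (z : ℂ) :
    ∃ ω : ℂ, ‖ω‖ = 1 ∧ (ω * z).re = 0 := by
  rcases eq_or_ne z 0 with rfl | hz
  · exact ⟨1, by simp, by simp⟩
  · refine ⟨Complex.I * conj z / ‖z‖, ?_, ?_⟩
    · simp [hz]
    · have hz' : (‖z‖ : ℂ) ≠ 0 := by simpa using hz
      rw [show Complex.I * conj z / ‖z‖ * z = ‖z‖ * Complex.I by
        rw [div_mul_eq_mul_div, mul_assoc, Complex.conj_mul']; field_simp]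
      simp

theorem Matrix.trace_mul_vecMulVec_star (H : Matrix ι ι ℂ) (w : ι → ℂ) :
    (H * vecMulVec w (star w)).trace = star w ⬝ᵥ H *ᵥ w := by
  rw [mul_vecMulVec, trace_vecMulVec, dotProduct_comm]

theorem Matrix.PosSemidef.exists_eq_sum_vecMulVec_star {ρ : Matrix ι ι ℂ} (hρ : ρ.PosSemidef) :
    ∃ w : ι → ι → ℂ, ρ = ∑ k, vecMulVec (w k) (star (w k)) := by
  classical
  obtain ⟨B, rfl⟩ := CStarAlgebra.nonneg_iff_eq_star_mul_self.mp hρ.nonneg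
  refine ⟨fun k => star (B k), ?_⟩
  ext i j
  simp [mul_apply, vecMulVec_apply, Matrix.sum_apply]

theorem star_smul_add_smul_dotProduct_mulVec (H : Matrix ι ι ℂ) (x y : ι → ℂ) (a b : ℂ) :
    star (a • x + b • y) ⬝ᵥ H *ᵥ (a • x + b • y) =
      conj a * a * (star x ⬝ᵥ H *ᵥ x) + conj a * b * (star x ⬝ᵥ H *ᵥ y) +
        conj b * a * (star y ⬝ᵥ H *ᵥ x) + conj b * b * (star y ⬝ᵥ H *ᵥ y) := by
  simp only [star_add, star_smul, mulVec_add, mulVec_smul, add_dotProduct, dotProduct_add,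
    smul_dotProduct, dotProduct_smul, smul_eq_mul, RCLike.star_def]
  ring

theorem vecMulVec_smul_add_smul_star (x y : ι → ℂ) (a b : ℂ) :
    vecMulVec (a • x + b • y) (star (a • x + b • y)) =
      (a * conj a) • vecMulVec x (star x) + (a * conj b) • vecMulVec x (star y) +
        (b * conj a) • vecMulVec y (star x) + (b * conj b) • vecMulVec y (star y) := by
  ext i j
  simp only [vecMulVec_apply, Matrix.add_apply, Matrix.smul_apply, Pi.add_apply, Pi.smul_apply,
    Pi.star_apply, star_add, star_smul, smul_eq_mul, RCLike.star_def]
  ring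

theorem exists_vecMulVec_add_eq_of_re_add_eq_zero (H : Matrix ι ι ℂ) (w₁ w₂ : ι → ℂ)
    (h : (star w₁ ⬝ᵥ H *ᵥ w₁).re + (star w₂ ⬝ᵥ H *ᵥ w₂).re = 0) :
    ∃ v₁ v₂ : ι → ℂ,
      vecMulVec v₁ (star v₁) + vecMulVec v₂ (star v₂) =
        vecMulVec w₁ (star w₁) + vecMulVec w₂ (star w₂) ∧
      (star v₁ ⬝ᵥ H *ᵥ v₁).re = 0 ∧ (star v₂ ⬝ᵥ H *ᵥ v₂).re = 0 := by
  set q₁ := star w₁ ⬝ᵥ H *ᵥ w₁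
  set q₂ := star w₂ ⬝ᵥ H *ᵥ w₂
  set X := star w₁ ⬝ᵥ H *ᵥ w₂
  set Y := star w₂ ⬝ᵥ H *ᵥ w₁
  obtain ⟨ω, hω, hωZ⟩ := Complex.exists_norm_eq_one_re_mul_eq_zero (X + conj Y)
  have hωω : ω * conj ω = 1 := by rw [Complex.mul_conj', hω]; simp
  have hcross : (ω * X).re + (conj ω * Y).re = 0 := by
    rw [← hωZ, mul_add, Complex.add_re, ← Complex.conj_re (conj ω * Y), map_mul,
      Complex.conj_conj]
  set c : ℂ := (((√2)⁻¹ : ℝ) : ℂ)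
  have hc : conj c = c := Complex.conj_ofReal _
  have hcc : c * c = 1 / 2 := by
    rw [← Complex.ofReal_mul, ← mul_inv, Real.mul_self_sqrt zero_le_two]; simp
  have hhalf : (1 / 2 : ℂ) = ((1 / 2 : ℝ) : ℂ) := by norm_num
  refine ⟨c • w₁ + (c * ω) • w₂, (-(c * conj ω)) • w₁ + c • w₂, ?_, ?_, ?_⟩
  · rw [vecMulVec_smul_add_smul_star, vecMulVec_smul_add_smul_star]
    simp only [map_mul, map_neg, hc, Complex.conj_conj]
    match_scalars
    · linear_combination (1 + ω * conj ω) * hcc + hωω / 2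
    · ring
    · ring
    · linear_combination (1 + ω * conj ω) * hcc + hωω / 2
  · rw [star_smul_add_smul_dotProduct_mulVec]
    simp only [map_mul, hc]
    rw [show c * c * q₁ + c * (c * ω) * X + c * conj ω * c * Y + c * conj ω * (c * ω) * q₂ =
        1 / 2 * (q₁ + q₂ + (ω * X + conj ω * Y)) by
      linear_combination (q₁ + ω * X + conj ω * Y) * hcc + q₂ * (c * c * hωω + hcc)]
    rw [hhalf, Complex.re_ofReal_mul]
    simp only [Complex.add_re]
    linarith
  · rw [star_smul_add_smul_dotProduct_mulVec]
    simp only [map_mul, map_neg, hc, Complex.conj_conj]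
    rw [show -(c * ω) * -(c * conj ω) * q₁ + -(c * ω) * c * X + c * -(c * conj ω) * Y +
        c * c * q₂ = 1 / 2 * (q₁ + q₂ - (ω * X + conj ω * Y)) by
      linear_combination q₁ * (c * c * hωω + hcc) + (q₂ - ω * X - conj ω * Y) * hcc]
    rw [hhalf, Complex.re_ofReal_mul]
    simp only [Complex.add_re, Complex.sub_re]
    linarith

theorem exists_eq_ofReal_smul_unit [Nonempty ι] (w : ι → ℂ) :
    ∃ (r : ℝ) (ψ : ι → ℂ), star ψ ⬝ᵥ ψ = 1 ∧ w = (r : ℂ) • ψ := by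
  classical
  rcases eq_or_ne w 0 with rfl | hw
  · exact ⟨0, Pi.single (Classical.arbitrary ι) 1, by simp, by simp⟩
  · obtain ⟨hre, him⟩ := Complex.nonneg_iff.mp (dotProduct_star_self_nonneg w)
    have hpos : 0 < (star w ⬝ᵥ w).re :=
      hre.lt_of_ne fun h => hw (dotProduct_star_self_eq_zero.mp (Complex.ext h.symm him.symm))
    set r := √(star w ⬝ᵥ w).re
    have hr : (r : ℂ) ≠ 0 := Complex.ofReal_ne_zero.mpr (Real.sqrt_pos.mpr hpos).ne'
    have hrr : (r : ℂ) * r = star w ⬝ᵥ w := by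
      rw [← Complex.ofReal_mul, Real.mul_self_sqrt hre]
      exact Complex.ext rfl him
    refine ⟨r, (r : ℂ)⁻¹ • w, ?_, by rw [smul_smul, mul_inv_cancel₀ hr, one_smul]⟩
    rw [star_smul, smul_dotProduct, dotProduct_smul, ← hrr, RCLike.star_def, map_inv₀,
      Complex.conj_ofReal, smul_eq_mul, smul_eq_mul]
    field_simp

theorem vecMulVec_ofReal_smul_star (r : ℝ) (ψ : ι → ℂ) :
    vecMulVec ((r : ℂ) • ψ) (star ((r : ℂ) • ψ)) = (r ^ 2) • vecMulVec ψ (star ψ) := by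
  ext i j
  simp only [vecMulVec_apply, star_smul, Pi.smul_apply, Pi.star_apply, smul_eq_mul,
    RCLike.star_def, Complex.conj_ofReal, Matrix.smul_apply, Complex.real_smul,
    Complex.ofReal_pow]
  ring

theorem star_ofReal_smul_dotProduct_mulVec (H : Matrix ι ι ℂ) (r : ℝ) (ψ : ι → ℂ) :
    star ((r : ℂ) • ψ) ⬝ᵥ H *ᵥ ((r : ℂ) • ψ) = (r ^ 2 : ℝ) * (star ψ ⬝ᵥ H *ᵥ ψ) := by
  rw [star_smul, mulVec_smul, smul_dotProduct, dotProduct_smul, RCLike.star_def,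
    Complex.conj_ofReal, smul_eq_mul, smul_eq_mul, Complex.ofReal_pow]
  ring

theorem dotProduct_sub_smul_one_mulVec [DecidableEq ι] (A : Matrix ι ι ℂ) (t : ℂ) {ψ : ι → ℂ}
    (hψ : star ψ ⬝ᵥ ψ = 1) : star ψ ⬝ᵥ (A - t • 1) *ᵥ ψ = star ψ ⬝ᵥ A *ᵥ ψ - t := by
  rw [sub_mulVec, smul_mulVec, one_mulVec, dotProduct_sub, dotProduct_smul, hψ, smul_eq_mul,
    mul_one]

end

theorem Matrix.PosSemidef.exists_eq_sum_vecMulVec_star_re_eq_zero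
    {ρ H : Matrix (Fin 2) (Fin 2) ℂ} (hρ : ρ.PosSemidef) (hH : ((H * ρ).trace).re = 0) :
    ∃ v : Fin 2 → Fin 2 → ℂ,
      ρ = ∑ k, vecMulVec (v k) (star (v k)) ∧ ∀ k, (star (v k) ⬝ᵥ H *ᵥ v k).re = 0 := by
  obtain ⟨w, rfl⟩ := hρ.exists_eq_sum_vecMulVec_star
  rw [Fin.sum_univ_two] at hH ⊢
  rw [Matrix.mul_add, trace_add, trace_mul_vecMulVec_star, trace_mul_vecMulVec_star,
    Complex.add_re] at hH
  obtain ⟨v₀, v₁, hv, hv₀, hv₁⟩ := exists_vecMulVec_add_eq_of_re_add_eq_zero H _ _ hH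
  exact ⟨![v₀, v₁], by simpa using hv.symm, fun k => by fin_cases k; exacts [hv₀, hv₁]⟩

theorem IsDensity.exists_decomposition_re_expectation_eq {ρ : Matrix (Fin 2) (Fin 2) ℂ}
    (hρ : IsDensity ρ) (A : Matrix (Fin 2) (Fin 2) ℂ) :
    ∃ (p : Fin 2 → ℝ) (ψ : Fin 2 → Fin 2 → ℂ), (∀ k, 0 ≤ p k) ∧ (∑ k, p k) = 1 ∧
      (∀ k, star (ψ k) ⬝ᵥ ψ k = 1) ∧ ρ = ∑ k, p k • ketbra (ψ k) ∧
      ∀ k, p k * (star (ψ k) ⬝ᵥ A *ᵥ ψ k).re = p k * ((A * ρ).trace).re := by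
  -- a summand of weight `0` may carry an arbitrary unit vector, hence the factor `p k`
  obtain ⟨hpsd, htr⟩ := hρ
  set t := ((A * ρ).trace).re
  have hH : (((A - (t : ℂ) • 1) * ρ).trace).re = 0 := by
    rw [sub_mul, trace_sub, smul_mul, one_mul, trace_smul, htr, smul_eq_mul, mul_one]
    simp [t]
  obtain ⟨v, hρv, hv⟩ := hpsd.exists_eq_sum_vecMulVec_star_re_eq_zero hH
  choose r ψ hψ hrψ using fun k => exists_eq_ofReal_smul_unit (v k)
  have hρψ : ρ = ∑ k, (r k ^ 2) • ketbra (ψ k) := by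
    simp only [hρv, hrψ, vecMulVec_ofReal_smul_star, ketbra]
  refine ⟨fun k => r k ^ 2, ψ, fun k => sq_nonneg _, ?_, hψ, hρψ, fun k => ?_⟩
  · have htrψ : ∀ k, (ketbra (ψ k)).trace = 1 := fun k => by
      rw [ketbra, trace_vecMulVec, dotProduct_comm, hψ]
    apply Complex.ofReal_injective
    simpa [hρψ, trace_sum, htrψ] using htr
  · have hk := hv k
    rw [hrψ k, star_ofReal_smul_dotProduct_mulVec, dotProduct_sub_smul_one_mulVec _ _ (hψ k),
      Complex.re_ofReal_mul, Complex.sub_re, Complex.ofReal_re] at hk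
    linear_combination hk

section

variable {A : Matrix (Fin 2) (Fin 2) ℂ} {c : ℂ}

theorem pureVar_eq_of_mul_self_eq_smul_one (hA : A * A = c • 1) {ψ : Fin 2 → ℂ}
    (hψ : star ψ ⬝ᵥ ψ = 1) : pureVar A ψ = c.re - (star ψ ⬝ᵥ A *ᵥ ψ).re ^ 2 := by
  rw [pureVar, hA, smul_mulVec, one_mulVec, dotProduct_smul, hψ, smul_eq_mul, mul_one]

theorem mixVar_eq_of_mul_self_eq_smul_one (hA : A * A = c • 1) {ρ : Matrix (Fin 2) (Fin 2) ℂ}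
    (hρ : ρ.trace = 1) : mixVar A ρ = c.re - ((A * ρ).trace).re ^ 2 := by
  rw [mixVar, hA, smul_mul, one_mul, trace_smul, hρ, smul_eq_mul, mul_one]

end

theorem Lspin_mul_self {n : Fin 3 → ℝ} (hn : n ⬝ᵥ n = 1) :
    Lspin n * Lspin n = (1 / 4 : ℂ) • 1 := by
  have hn' : (n 0 : ℂ) ^ 2 + (n 1 : ℂ) ^ 2 + (n 2 : ℂ) ^ 2 = 1 := by
    simp only [dotProduct, Fin.sum_univ_three] at hn
    exact_mod_cast (by linear_combination hn : n 0 ^ 2 + n 1 ^ 2 + n 2 ^ 2 = 1)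
  ext i j
  fin_cases i <;> fin_cases j <;>
    simp [Lspin, sigmaX, sigmaY, sigmaZ, mul_apply, Fin.sum_univ_two]
  · linear_combination (hn' - (n 1 : ℂ) ^ 2 * Complex.I_sq) / 4
  · ring
  · ring
  · linear_combination (hn' - (n 1 : ℂ) ^ 2 * Complex.I_sq) / 4

/-- There exists a pure-state decomposition of a qubit state ρ whose average variance
attains the variance of ρ itself (the concave-roof property of the variance). -/
theorem stmt_8 (ρ : Matrix (Fin 2) (Fin 2) ℂ) (hρ : IsDensity ρ)
    (n : Fin 3 → ℝ) (hn : n ⬝ᵥ n = 1) :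
    ∃ (m : ℕ) (p : Fin m → ℝ) (ψ : Fin m → (Fin 2 → ℂ)),
      (∀ k, 0 ≤ p k) ∧ (∑ k, p k) = 1 ∧
      (∀ k, star (ψ k) ⬝ᵥ ψ k = 1) ∧
      ρ = (∑ k, p k • ketbra (ψ k)) ∧
      (∑ k, p k * pureVar (Lspin n) (ψ k)) = mixVar (Lspin n) ρ := by
  obtain ⟨p, ψ, hp, hp₁, hψ, hρψ, hexp⟩ := hρ.exists_decomposition_re_expectation_eq (Lspin n)
  have hL := Lspin_mul_self hn
  refine ⟨2, p, ψ, hp, hp₁, hψ, hρψ, ?_⟩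
  set t := ((Lspin n * ρ).trace).re
  calc ∑ k, p k * pureVar (Lspin n) (ψ k) = ∑ k, p k * ((1 / 4 : ℂ).re - t ^ 2) := by
        refine Finset.sum_congr rfl fun k _ => ?_
        rw [pureVar_eq_of_mul_self_eq_smul_one hL (hψ k)]
        linear_combination (-(star (ψ k) ⬝ᵥ Lspin n *ᵥ ψ k).re - t) * hexp k
    _ = mixVar (Lspin n) ρ := by
        rw [← Finset.sum_mul, hp₁, one_mul, mixVar_eq_of_mul_self_eq_smul_one hL hρ.2]
end
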